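/- If kΔ(P) is the k-th dilate of the order polytope of a finite pure poset P of height h_P, then kΔ(P) contains exactly one interior lattice point when k = h_P, and the number of interior lattice points of (h_P + 1)Δ(P) equals the number of order ideals of P, i.e., |J(P)|. -/

import Mathlib

/-!
Any strict chain in a finite bounded poset `P̂` refines to a maximal (covering) chain. If `P̂` is
pure, every maximal chain has length `h_P`, so along it the height of an element is its index.
Hence any two comparable elements `u ≤ v` lie on a common maximal chain, and a strictly increasing
integer map `X` on `P̂` satisfies `X v - X u ≥ h v - h u`. Interior lattice points of `kΔ(P)` are
the strictly increasing maps `P̂ → ℤ` with `0̂ ↦ 0` and `1̂ ↦ k`. For `k = h_P` this squeezes `x`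
to `x = h`; for `k = h_P + 1` it gives `h ≤ x ≤ h + 1`, and `x` is determined by the order ideal
`{u | x u = h u}`, while every order ideal arises this way.
-/

open Pointwise

/-- The order polytope of a finite poset `P`. -/
def orderPolytope (P : Type*) [PartialOrder P] : Set (P → ℝ) :=
  {x | (∀ u : P, x u ∈ Set.Icc (0 : ℝ) 1) ∧ ∀ u v : P, u ≤ v → x u ≤ x v}

/-- `h` is the height function of a poset `Q`. -/
def IsHeightFn {Q : Type*} [PartialOrder Q] (h : Q → ℕ) : Prop :=
  ∀ u : Q, IsGreatest {n : ℕ | ∃ c : Fin (n + 1) → Q, StrictMono c ∧ c (Fin.last n) = u} (h u)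

/-- A maximal chain of length `n` in a bounded poset. -/
def IsMaxChain' {Q : Type*} [PartialOrder Q] [BoundedOrder Q] {n : ℕ}
    (c : Fin (n + 1) → Q) : Prop :=
  c 0 = ⊥ ∧ c (Fin.last n) = ⊤ ∧ ∀ i : Fin n, c i.castSucc ⋖ c i.succ

def IsPure (Q : Type*) [PartialOrder Q] [BoundedOrder Q] : Prop :=
  ∀ (n m : ℕ) (c : Fin (n + 1) → Q) (c' : Fin (m + 1) → Q),
    IsMaxChain' c → IsMaxChain' c' → n = m

open Order

section Height

variable {Q : Type*} [PartialOrder Q] {h : Q → ℕ}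

theorem IsHeightFn.height_eq (hh : IsHeightFn h) (u : Q) : height u = h u := by
  obtain ⟨c, hc, hcu⟩ := (hh u).1
  refine le_antisymm (height_le fun p hp => ?_) ?_
  · exact_mod_cast (hh u).2 ⟨p.toFun, p.strictMono, hp⟩
  · exact (length_le_height_last (p := LTSeries.mk _ c hc)).trans_eq (congrArg height hcu)

theorem IsHeightFn.strictMono (hh : IsHeightFn h) : StrictMono h := fun u v huv => by
  have := height_add_one_le huv
  rw [hh.height_eq, hh.height_eq] at this
  exact Nat.lt_of_succ_le (by exact_mod_cast this)

theorem IsHeightFn.apply_bot [OrderBot Q] (hh : IsHeightFn h) : h ⊥ = 0 := by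
  exact_mod_cast (hh.height_eq ⊥).symm.trans (height_bot Q)

end Height

theorem exists_covBy_relSeries_bot_top_of_lt {Q : Type*} [PartialOrder Q] [BoundedOrder Q]
    [WellFoundedLT Q] [WellFoundedGT Q] {u v : Q} (huv : u < v) :
    ∃ t : RelSeries {(a, b) : Q × Q | a ⋖ b}, t.head = ⊥ ∧ t.last = ⊤ ∧
      ∃ a b : Fin (t.length + 1), a < b ∧ t a = u ∧ t b = v := by
  obtain ⟨t, i, hti, ht₀, ht₁⟩ :=
    LTSeries.exists_relSeries_covBy_and_head_eq_bot_and_last_eq_bot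
      ((RelSeries.singleton _ u).snoc v huv)
  refine ⟨t, ht₀, ht₁, i 0, i (Fin.last _), ?_, congrFun hti 0, congrFun hti (Fin.last _)⟩
  apply (LTSeries.strictMono (t.ofLE fun _ => CovBy.lt)).lt_iff_lt.mp
  exact (congrFun hti 0).trans_lt (huv.trans_eq (congrFun hti (Fin.last _)).symm)

namespace IsPure

variable {Q : Type*} [PartialOrder Q] [BoundedOrder Q] [WellFoundedLT Q] [WellFoundedGT Q]
  {h : Q → ℕ}

theorem length_eq_height_top (hQ : IsPure Q) {t : RelSeries {(a, b) : Q × Q | a ⋖ b}}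
    (ht₀ : t.head = ⊥) (ht₁ : t.last = ⊤) : (t.length : ℕ∞) = height (⊤ : Q) := by
  refine le_antisymm ?_ (height_le fun p _ => ?_)
  · exact ht₁ ▸ length_le_height_last (p := (t.ofLE fun _ => CovBy.lt : LTSeries Q))
  · obtain ⟨t', i, -, ht'₀, ht'₁⟩ := p.exists_relSeries_covBy_and_head_eq_bot_and_last_eq_bot
    have hlen : p.length + 1 ≤ t'.length + 1 := by simpa using Fintype.card_le_of_embedding i
    have := hQ _ _ t' t ⟨ht'₀, ht'₁, t'.step⟩ ⟨ht₀, ht₁, t.step⟩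
    exact_mod_cast (by omega : p.length ≤ t.length)

theorem height_eq_index (hQ : IsPure Q) {t : RelSeries {(a, b) : Q × Q | a ⋖ b}}
    (ht₀ : t.head = ⊥) (ht₁ : t.last = ⊤) (k : Fin (t.length + 1)) : height (t k) = k :=
  height_eq_index_of_length_eq_height_last (p := (t.ofLE fun _ => CovBy.lt : LTSeries Q))
    ((hQ.length_eq_height_top ht₀ ht₁).trans (congrArg height ht₁.symm)) k

theorem apply_add_le_apply_add (hQ : IsPure Q) (hh : IsHeightFn h) {X : Q → ℤ}
    (hX : StrictMono X) {u v : Q} (huv : u ≤ v) : X u + h v ≤ X v + h u := by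
  rcases huv.eq_or_lt with rfl | huv
  · rfl
  obtain ⟨t, ht₀, ht₁, a, b, hab, rfl, rfl⟩ := exists_covBy_relSeries_bot_top_of_lt huv
  have hheight (k : Fin (t.length + 1)) : h (t k) = k := by
    exact_mod_cast (hh.height_eq _).symm.trans (hQ.height_eq_index ht₀ ht₁ k)
  rw [hheight, hheight]
  exact LTSeries.apply_add_index_le_apply_add_index_int
    (LTSeries.map (t.ofLE fun _ => CovBy.lt) X hX) a b hab.le

end IsPure

open Filter Topology in
theorem exists_pos_add_smul_mem_of_mem_interior {E : Type*} [TopologicalSpace E] [AddCommGroup E]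
    [Module ℝ E] [ContinuousAdd E] [ContinuousSMul ℝ E] {s : Set E} {x : E}
    (hx : x ∈ interior s) (e : E) : ∃ t : ℝ, 0 < t ∧ x + t • e ∈ s := by
  have hcont : Tendsto (fun t : ℝ => x + t • e) (𝓝[>] 0) (𝓝 x) := by
    have : Continuous fun t : ℝ => x + t • e := by fun_prop
    simpa using (this.tendsto 0).mono_left nhdsWithin_le_nhds
  obtain ⟨t, hts, ht⟩ :=
    ((hcont.eventually (mem_interior_iff_mem_nhds.mp hx)).and self_mem_nhdsWithin).exists
  exact ⟨t, ht, hts⟩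

section OrderPolytope

variable {P : Type*} [PartialOrder P]

theorem smul_orderPolytope {k : ℝ} (hk : 0 < k) :
    k • orderPolytope P = {y | (∀ u, y u ∈ Set.Icc 0 k) ∧ Monotone y} := by
  ext y
  rw [Set.mem_smul_set_iff_inv_smul_mem₀ hk.ne']
  simp only [orderPolytope, Set.mem_ofPred_eq, Set.mem_Icc, Pi.smul_apply, smul_eq_mul,
    mul_nonneg_iff_of_pos_left (inv_pos.2 hk), inv_mul_le_one₀ hk,
    mul_le_mul_iff_of_pos_left (inv_pos.2 hk)]
  rfl

theorem interior_smul_orderPolytope [Finite P] {k : ℝ} (hk : 0 < k) :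
    interior (k • orderPolytope P) = {y | (∀ u, y u ∈ Set.Ioo 0 k) ∧ StrictMono y} := by
  classical
  apply subset_antisymm
  · intro y hy
    rw [smul_orderPolytope hk] at hy
    refine ⟨fun u => ⟨?_, ?_⟩, fun u v huv => ?_⟩
    · obtain ⟨t, ht, hmem⟩ := exists_pos_add_smul_mem_of_mem_interior hy (Pi.single u (-1))
      have := (hmem.1 u).1
      simp only [Pi.add_apply, Pi.smul_apply, Pi.single_eq_same, smul_eq_mul] at this
      linarith
    · obtain ⟨t, ht, hmem⟩ := exists_pos_add_smul_mem_of_mem_interior hy (Pi.single u 1)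
      have := (hmem.1 u).2
      simp only [Pi.add_apply, Pi.smul_apply, Pi.single_eq_same, smul_eq_mul] at this
      linarith
    · obtain ⟨t, ht, hmem⟩ := exists_pos_add_smul_mem_of_mem_interior hy (Pi.single u 1)
      have := hmem.2 huv.le
      simp only [Pi.add_apply, Pi.smul_apply, Pi.single_eq_same, Pi.single_eq_of_ne huv.ne',
        smul_eq_mul] at this
      linarith
  · refine interior_maximal ?_ ?_
    · rw [smul_orderPolytope hk]
      exact fun y hy => ⟨fun u => Set.Ioo_subset_Icc_self (hy.1 u), hy.2.monotone⟩
    · simp only [Set.ofPred_and, Set.ofPred_forall, StrictMono]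
      exact (isOpen_iInter_of_finite fun u => isOpen_Ioo.preimage (continuous_apply u)).inter
        (isOpen_iInter_of_finite fun a => isOpen_iInter_of_finite fun b =>
          isOpen_iInter_of_finite fun _ => isOpen_lt (continuous_apply a) (continuous_apply b))

end OrderPolytope

section HatExtend

variable {P α : Type*}

/-- The map on `P̂ = WithBotTop P` with value `a` at `0̂`, `b` at `1̂` and `x` on `P`. -/
def hatExtend (a b : α) (x : P → α) : WithBotTop P → α :=
  fun q => WithBotTop.rec a x b q

@[simp] theorem hatExtend_bot (a b : α) (x : P → α) : hatExtend a b x ⊥ = a := rfl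

@[simp] theorem hatExtend_top (a b : α) (x : P → α) : hatExtend a b x ⊤ = b := rfl

@[simp] theorem hatExtend_coe (a b : α) (x : P → α) (u : P) : hatExtend a b x u = x u := rfl

theorem strictMono_hatExtend_iff [Preorder P] [Preorder α] {a b : α} (hab : a < b)
    {x : P → α} : StrictMono (hatExtend a b x) ↔ (∀ u, x u ∈ Set.Ioo a b) ∧ StrictMono x := by
  refine ⟨fun hx => ⟨fun u => ⟨hx (show ⊥ < (u : WithBotTop P) from WithBot.bot_lt_coe _),
    hx (show (u : WithBotTop P) < ⊤ from WithBot.coe_lt_coe.2 (WithTop.coe_lt_top u))⟩,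
    hx.comp WithBotTop.coe_strictMono⟩, fun ⟨hbd, hx⟩ q q' hqq' => ?_⟩
  induction q using WithBotTop.rec <;> induction q' using WithBotTop.rec
  all_goals first | exact hx (WithBotTop.coe_lt_coe.1 hqq') | simp_all

end HatExtend

theorem intCast_mem_interior_smul_orderPolytope_iff {P : Type*} [PartialOrder P] [Finite P]
    {K : ℤ} (hK : 0 < K) (x : P → ℤ) :
    (fun u => (x u : ℝ)) ∈ interior ((K : ℝ) • orderPolytope P) ↔
      StrictMono (hatExtend 0 K x) := by
  rw [interior_smul_orderPolytope (by exact_mod_cast hK), strictMono_hatExtend_iff hK]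
  simp [StrictMono]

section LatticePoints

variable {P : Type*} [PartialOrder P] [Finite P] {h : WithBotTop P → ℕ}
  (hh : IsHeightFn h) (hP : IsPure (WithBotTop P))
include hh hP

theorem height_le_of_strictMono_hatExtend {K : ℤ} {x : P → ℤ}
    (hx : StrictMono (hatExtend 0 K x)) (u : P) : h u ≤ x u ∧ x u + h ⊤ ≤ K + h u := by
  have hbot := hP.apply_add_le_apply_add hh hx (bot_le : ⊥ ≤ (u : WithBotTop P))
  have htop := hP.apply_add_le_apply_add hh hx (le_top : (u : WithBotTop P) ≤ ⊤)
  simp only [hatExtend_bot, hatExtend_top, hatExtend_coe, hh.apply_bot] at hbot htop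
  omega

theorem eq_height_of_strictMono_hatExtend {x : P → ℤ}
    (hx : StrictMono (hatExtend 0 (h ⊤ : ℤ) x)) : x = fun u : P => (h u : ℤ) :=
  funext fun u => by have := height_le_of_strictMono_hatExtend hh hP hx u; omega

omit [Finite P] hP in
theorem strictMono_hatExtend_height :
    StrictMono (hatExtend 0 (h ⊤ : ℤ) fun u : P => (h u : ℤ)) := by
  have : hatExtend 0 (h ⊤ : ℤ) (fun u : P => (h u : ℤ)) = fun q => (h q : ℤ) := by
    funext q
    induction q using WithBotTop.rec <;> simp [hh.apply_bot]
  rw [this]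
  exact Nat.strictMono_cast.comp hh.strictMono

open Classical in
noncomputable def lowerSetEquiv :
    {x : P → ℤ // StrictMono (hatExtend 0 (h ⊤ + 1 : ℤ) x)} ≃ LowerSet P where
  toFun x := ⟨{u | x.1 u = h u}, fun a b hba (ha : x.1 a = h a) => by
    have hstep := hP.apply_add_le_apply_add hh x.2 (WithBotTop.coe_le_coe.2 hba)
    have hb := height_le_of_strictMono_hatExtend hh hP x.2 b
    simp only [hatExtend_coe] at hstep
    exact (by omega : x.1 b = h b)⟩
  invFun I := ⟨fun u => h u + if u ∈ I then 0 else 1, by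
    have hlt {q q'} (hqq' : q < q') : (h q : ℤ) < h q' := by exact_mod_cast hh.strictMono hqq'
    refine (strictMono_hatExtend_iff (by omega)).2 ⟨fun u => ⟨?_, ?_⟩, fun u v huv => ?_⟩
    · have := hlt (bot_lt_iff_ne_bot.2 (WithBotTop.coe_ne_bot u))
      rw [hh.apply_bot] at this
      split_ifs <;> omega
    · have := hlt (lt_top_iff_ne_top.2 (WithBotTop.coe_ne_top u))
      split_ifs <;> omega
    · have hhuv := hlt (WithBotTop.coe_lt_coe.2 huv)
      have hI := fun hv => I.lower huv.le hv
      dsimp only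
      split_ifs <;> first | omega | exact absurd (hI ‹_›) ‹_›⟩
  left_inv x := Subtype.ext <| funext fun u => by
    have := height_le_of_strictMono_hatExtend hh hP x.2 u
    dsimp only
    split_ifs with hu
    · exact (add_zero _).trans hu.symm
    · change ¬x.1 u = h u at hu
      omega
  right_inv I := by
    ext u
    simp

end LatticePoints

/-- For a finite pure poset `P` of height `h_P`, the dilate `h_P·Δ(P)` of the
order polytope has exactly one interior lattice point, and the number of
interior lattice points of `(h_P + 1)·Δ(P)` equals the number of order ideals
of `P`, i.e. `|J(P)|`. -/
theorem stmt_11 (P : Type*) [Fintype P] [PartialOrder P]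
    (h : WithBot (WithTop P) → ℕ) (hh : IsHeightFn h)
    (hpure : ∀ (n m : ℕ) (c : Fin (n + 1) → WithBot (WithTop P))
      (c' : Fin (m + 1) → WithBot (WithTop P)),
      IsMaxChain' c → IsMaxChain' c' → n = m) :
    Nat.card {x : P → ℤ //
        (fun u => (x u : ℝ)) ∈ interior ((h ⊤ : ℝ) • orderPolytope P)} = 1 ∧
    Nat.card {x : P → ℤ //
        (fun u => (x u : ℝ)) ∈ interior (((h ⊤ : ℕ) + 1 : ℝ) • orderPolytope P)} =
      Nat.card (LowerSet P) := by
  have hH : 0 < (h ⊤ : ℤ) := by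
    exact_mod_cast hh.apply_bot ▸ hh.strictMono (bot_lt_top : (⊥ : WithBotTop P) < ⊤)
  constructor
  · have hmem := intCast_mem_interior_smul_orderPolytope_iff (P := P) hH
    push_cast at hmem
    rw [Nat.card_eq_one_iff_exists]
    refine ⟨⟨_, (hmem _).2 (strictMono_hatExtend_height hh)⟩, fun x => Subtype.ext ?_⟩
    exact eq_height_of_strictMono_hatExtend hh hpure ((hmem x.1).1 x.2)
  · have hmem := intCast_mem_interior_smul_orderPolytope_iff (P := P) (hH.trans (lt_add_one _))
    push_cast at hmem
    exact Nat.card_congr ((Equiv.subtypeEquivRight hmem).trans (lowerSetEquiv hh hpure))
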